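/- arXiv:2108.13791 — 2 statements merged into one kernel-verified Lean document; each statement's English description precedes it below -/
import Mathlib

section
/- The sequence (F_n) from the geometric construction converges uniformly on [0,1]; its limit F is continuous, monotone increasing, satisfies F(0) = 0 and F(1) = 1, and is constant on each connected component of [0,1] \ C (on which F agrees with F_n for all sufficiently large n); in particular F′(x) = 0 for every x ∈ [0,1] \ C. -/
/-- The stages of the construction of the Cantor ternary set:
`C_0 = [0,1]`, `C_{n+1} = (1/3)·C_n ∪ (2/3 + (1/3)·C_n)`. -/
def preCantor : ℕ → Set ℝ
  | 0 => Set.Icc 0 1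
  | n + 1 => (fun x : ℝ => x / 3) '' preCantor n ∪ (fun x : ℝ => 2 / 3 + x / 3) '' preCantor n

/-- The Cantor ternary set `C = ⋂ n, C_n`. -/
def cantorC : Set ℝ := ⋂ n, preCantor n

/-- The first polygonal approximation `F₁` to the Cantor–Lebesgue function. -/
noncomputable def cantorPolyBase (x : ℝ) : ℝ :=
  if x ≤ 1 / 3 then (3 / 2) * x
  else if x < 2 / 3 then 1 / 2
  else (3 / 2) * x - 1 / 2

/-- The polygonal approximations to the Cantor–Lebesgue function;
`cantorPoly n` is the function `F_{n+1}` of the geometric construction. -/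
noncomputable def cantorPoly : ℕ → ℝ → ℝ
  | 0 => cantorPolyBase
  | n + 1 => fun x =>
      if x ≤ 1 / 3 then (1 / 2) * cantorPoly n (3 * x)
      else if x < 2 / 3 then cantorPoly n x
      else (1 / 2) * cantorPoly n (3 * x - 2) + 1 / 2

/-!
Each `F_{n+1}` consists of two half-size copies of `F_n` on the outer thirds and the constant
`1/2` in the middle, so by induction `F_{n+1} - F_n = O(2^{-n})` uniformly on `[0, 1]`: the
sequence is uniformly Cauchy, and the limit inherits continuity, monotonicity and the endpoint
values. The `C_n` are decreasing compact sets, so a compact interval missing `C` already misses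
some `C_N`, i.e. lies in one gap of `C_N`, and on such a gap every `F_n` with `n ≥ N` equals the
constant value of `F_N`. Since `[0, 1] \ C` is open in `ℝ`, `F` is locally constant on it.
-/

open Set Filter Topology

lemma exists_tendstoUniformlyOn_of_dist_le_geometric {α β : Type*} [PseudoMetricSpace β]
    [CompleteSpace β] {f : ℕ → α → β} {s : Set α} {C r : ℝ} (hr₀ : 0 ≤ r) (hr : r < 1)
    (h : ∀ x ∈ s, ∀ n, dist (f n x) (f (n + 1) x) ≤ C * r ^ n) :
    ∃ F, TendstoUniformlyOn f F atTop s := by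
  have hlim (x : α) : ∃ y, x ∈ s → Tendsto (fun n => f n x) atTop (𝓝 y) := by
    by_cases hx : x ∈ s
    · obtain ⟨y, hy⟩ := cauchySeq_tendsto_of_complete (cauchySeq_of_le_geometric r C hr (h x hx))
      exact ⟨y, fun _ => hy⟩
    · exact ⟨f 0 x, fun hx' => absurd hx' hx⟩
  choose F hF using hlim
  refine ⟨F, Metric.tendstoUniformlyOn_iff.mpr fun ε hε => ?_⟩
  have hbound : Tendsto (fun n => C * r ^ n / (1 - r)) atTop (𝓝 0) := by
    simpa using ((tendsto_pow_atTop_nhds_zero_of_lt_one hr₀ hr).const_mul C).div_const (1 - r)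
  filter_upwards [hbound.eventually_lt_const hε] with n hn x hx
  rw [dist_comm]
  exact (dist_le_of_le_geometric_of_tendsto r C hr (h x hx) (hF x hx) n).trans_lt hn

lemma monotoneOn_Icc_of_thirds {f : ℝ → ℝ} (h₁ : MonotoneOn f (Icc 0 (1 / 3)))
    (h₂ : MonotoneOn f (Icc (1 / 3) (2 / 3))) (h₃ : MonotoneOn f (Icc (2 / 3) 1)) :
    MonotoneOn f (Icc 0 1) := by
  have h₁₂ := h₁.union_right h₂ (isGreatest_Icc (by norm_num)) (isLeast_Icc (by norm_num))
  rw [Icc_union_Icc_eq_Icc (by norm_num) (by norm_num)] at h₁₂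
  have h₁₂₃ := h₁₂.union_right h₃ (isGreatest_Icc (by norm_num)) (isLeast_Icc (by norm_num))
  rwa [Icc_union_Icc_eq_Icc (by norm_num) (by norm_num)] at h₁₂₃

lemma continuous_ite_thirds {f g h : ℝ → ℝ} (hf : Continuous f) (hg : Continuous g)
    (hh : Continuous h) (hfg : f (1 / 3) = g (1 / 3)) (hgh : g (2 / 3) = h (2 / 3)) :
    Continuous fun x => if x ≤ 1 / 3 then f x else if x < 2 / 3 then g x else h x := by
  have hgh' : Continuous fun x : ℝ => if x < 2 / 3 then g x else h x := by
    refine hg.if (fun a ha => ?_) hh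
    rw [show {x : ℝ | x < 2 / 3} = Iio (2 / 3) from rfl, frontier_Iio, mem_singleton_iff] at ha
    rwa [ha]
  refine hf.if_le hgh' continuous_id continuous_const fun x hx => ?_
  rw [hx, if_pos (by norm_num), hfg]

section CantorPoly

variable {n : ℕ} {x : ℝ}

lemma cantorPoly_zero_eq :
    cantorPoly 0 = fun x => if x ≤ 1 / 3 then (3 / 2) * x
      else if x < 2 / 3 then 1 / 2 else (3 / 2) * x - 1 / 2 := rfl

lemma cantorPoly_succ_eq (n : ℕ) :
    cantorPoly (n + 1) = fun x => if x ≤ 1 / 3 then (1 / 2) * cantorPoly n (3 * x)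
      else if x < 2 / 3 then cantorPoly n x
      else (1 / 2) * cantorPoly n (3 * x - 2) + 1 / 2 := rfl

lemma cantorPoly_succ_of_le (h : x ≤ 1 / 3) :
    cantorPoly (n + 1) x = (1 / 2) * cantorPoly n (3 * x) := by
  simp only [cantorPoly_succ_eq, if_pos h]

lemma cantorPoly_succ_of_mem_Ioo (h : x ∈ Ioo (1 / 3) (2 / 3)) :
    cantorPoly (n + 1) x = cantorPoly n x := by
  simp only [cantorPoly_succ_eq, if_neg (not_le.mpr h.1), if_pos h.2]

lemma cantorPoly_succ_of_ge (h : 2 / 3 ≤ x) :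
    cantorPoly (n + 1) x = (1 / 2) * cantorPoly n (3 * x - 2) + 1 / 2 := by
  simp only [cantorPoly_succ_eq, if_neg (not_lt.mpr h), if_neg (by linarith : ¬x ≤ 1 / 3)]

lemma cantorPoly_of_mem_Ioo (h : x ∈ Ioo (1 / 3) (2 / 3)) : cantorPoly n x = 1 / 2 := by
  induction n with
  | zero => simp only [cantorPoly_zero_eq, if_neg (not_le.mpr h.1), if_pos h.2]
  | succ m ih => rw [cantorPoly_succ_of_mem_Ioo h, ih]

@[simp] lemma cantorPoly_apply_zero (n : ℕ) : cantorPoly n 0 = 0 := by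
  induction n with
  | zero => norm_num [cantorPoly_zero_eq]
  | succ m ih => rw [cantorPoly_succ_of_le (by norm_num)]; simp [ih]

@[simp] lemma cantorPoly_apply_one (n : ℕ) : cantorPoly n 1 = 1 := by
  induction n with
  | zero => norm_num [cantorPoly_zero_eq]
  | succ m ih => rw [cantorPoly_succ_of_ge (by norm_num)]; norm_num [ih]

lemma cantorPoly_apply_one_third (n : ℕ) : cantorPoly n (1 / 3) = 1 / 2 := by
  cases n with
  | zero => norm_num [cantorPoly_zero_eq]
  | succ m => rw [cantorPoly_succ_of_le le_rfl]; norm_num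

lemma cantorPoly_apply_two_thirds (n : ℕ) : cantorPoly n (2 / 3) = 1 / 2 := by
  cases n with
  | zero => norm_num [cantorPoly_zero_eq]
  | succ m => rw [cantorPoly_succ_of_ge le_rfl]; norm_num

lemma cantorPoly_of_mem_Icc (h : x ∈ Icc (1 / 3) (2 / 3)) : cantorPoly n x = 1 / 2 := by
  rcases h.1.eq_or_lt with rfl | h₁
  · exact cantorPoly_apply_one_third n
  rcases h.2.eq_or_lt with rfl | h₂
  · exact cantorPoly_apply_two_thirds n
  exact cantorPoly_of_mem_Ioo ⟨h₁, h₂⟩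

lemma monotoneOn_cantorPoly (n : ℕ) : MonotoneOn (cantorPoly n) (Icc 0 1) := by
  induction n with
  | zero =>
    rintro x ⟨hx₀, hx₁⟩ y ⟨hy₀, hy₁⟩ hxy
    simp only [cantorPoly_zero_eq]
    split_ifs <;> linarith
  | succ m ih =>
    refine monotoneOn_Icc_of_thirds ?_ ?_ ?_
    · rintro x ⟨hx₀, hx₁⟩ y ⟨hy₀, hy₁⟩ hxy
      rw [cantorPoly_succ_of_le hx₁, cantorPoly_succ_of_le hy₁]
      gcongr
      exact ih ⟨by linarith, by linarith⟩ ⟨by linarith, by linarith⟩ (by linarith)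
    · intro x hx y hy _
      rw [cantorPoly_of_mem_Icc hx, cantorPoly_of_mem_Icc hy]
    · rintro x ⟨hx₀, hx₁⟩ y ⟨hy₀, hy₁⟩ hxy
      rw [cantorPoly_succ_of_ge hx₀, cantorPoly_succ_of_ge hy₀]
      gcongr
      exact ih ⟨by linarith, by linarith⟩ ⟨by linarith, by linarith⟩ (by linarith)

lemma mapsTo_cantorPoly (n : ℕ) : MapsTo (cantorPoly n) (Icc 0 1) (Icc 0 1) := fun x hx =>
  ⟨by simpa using monotoneOn_cantorPoly n ⟨le_rfl, zero_le_one⟩ hx hx.1,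
    by simpa using monotoneOn_cantorPoly n hx ⟨zero_le_one, le_rfl⟩ hx.2⟩

lemma continuous_cantorPoly (n : ℕ) : Continuous (cantorPoly n) := by
  induction n with
  | zero =>
    rw [cantorPoly_zero_eq]
    exact continuous_ite_thirds (by fun_prop) (by fun_prop) (by fun_prop) (by norm_num)
      (by norm_num)
  | succ m ih =>
    rw [cantorPoly_succ_eq]
    refine continuous_ite_thirds (by fun_prop) ih (by fun_prop) ?_ ?_
    · norm_num [cantorPoly_apply_one_third]
    · norm_num [cantorPoly_apply_two_thirds]

lemma dist_cantorPoly_succ_le (n : ℕ) (hx : x ∈ Icc 0 1) :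
    dist (cantorPoly n x) (cantorPoly (n + 1) x) ≤ (1 / 2) ^ n := by
  induction n generalizing x with
  | zero =>
    simpa using Real.dist_le_of_mem_Icc_01 (mapsTo_cantorPoly 0 hx) (mapsTo_cantorPoly 1 hx)
  | succ m ih =>
    have half_dist (a b : ℝ) : dist (1 / 2 * a) (1 / 2 * b) = 1 / 2 * dist a b := by
      rw [Real.dist_eq, Real.dist_eq, ← mul_sub, abs_mul, abs_of_pos (by norm_num)]
    rw [pow_succ, mul_comm _ (1 / 2)]
    rcases le_or_gt x (1 / 3) with h₁ | h₁
    · rw [cantorPoly_succ_of_le h₁, cantorPoly_succ_of_le h₁, half_dist]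
      gcongr
      exact ih ⟨by linarith [hx.1], by linarith⟩
    rcases lt_or_ge x (2 / 3) with h₂ | h₂
    · rw [cantorPoly_of_mem_Ioo ⟨h₁, h₂⟩, cantorPoly_of_mem_Ioo ⟨h₁, h₂⟩, dist_self]
      positivity
    · rw [cantorPoly_succ_of_ge h₂, cantorPoly_succ_of_ge h₂, dist_add_right, half_dist]
      gcongr
      exact ih ⟨by linarith, by linarith [hx.2]⟩

end CantorPoly

lemma isCompact_preCantor (n : ℕ) : IsCompact (preCantor n) := by
  induction n with
  | zero => exact isCompact_Icc
  | succ m ih => exact (ih.image (by fun_prop)).union (ih.image (by fun_prop))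

lemma preCantor_succ_subset (n : ℕ) : preCantor (n + 1) ⊆ preCantor n := by
  induction n with
  | zero =>
    rintro _ (⟨y, hy, rfl⟩ | ⟨y, hy, rfl⟩) <;> exact ⟨by linarith [hy.1], by linarith [hy.2]⟩
  | succ m ih =>
    rintro _ (⟨y, hy, rfl⟩ | ⟨y, hy, rfl⟩)
    exacts [Or.inl ⟨y, ih hy, rfl⟩, Or.inr ⟨y, ih hy, rfl⟩]

lemma zero_mem_preCantor (n : ℕ) : (0 : ℝ) ∈ preCantor n := by
  induction n with
  | zero => exact ⟨le_rfl, zero_le_one⟩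
  | succ m ih => exact Or.inl ⟨0, ih, by norm_num⟩

lemma one_mem_preCantor (n : ℕ) : (1 : ℝ) ∈ preCantor n := by
  induction n with
  | zero => exact ⟨zero_le_one, le_rfl⟩
  | succ m ih => exact Or.inr ⟨1, ih, by norm_num⟩

lemma notMem_cantorC_iff {x : ℝ} : x ∉ cantorC ↔ ∃ N, x ∉ preCantor N := by
  simp [cantorC]

lemma exists_disjoint_preCantor {K : Set ℝ} (hK : IsCompact K) (h : Disjoint K cantorC) :
    ∃ N, Disjoint K (preCantor N) := by
  simp only [disjoint_iff_inter_eq_empty] at h ⊢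
  exact hK.elim_directed_family_closed _ (fun n => (isCompact_preCantor n).isClosed) h
    (antitone_nat_of_succ_le preCantor_succ_subset).directed_ge

lemma cantorPoly_eq_of_disjoint_preCantor {N : ℕ} {a b : ℝ} (ha : 0 ≤ a) (hb : b ≤ 1)
    (hab : Disjoint (Icc a b) (preCantor N)) {n : ℕ} (hn : N ≤ n) {z : ℝ} (hz : z ∈ Icc a b) :
    cantorPoly n z = cantorPoly N a := by
  induction N generalizing a b n z with
  | zero => exact (hab.notMem_of_mem_left hz ⟨ha.trans hz.1, hz.2.trans hb⟩).elim
  | succ m ih =>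
    obtain ⟨k, rfl⟩ : ∃ k, n = k + 1 := ⟨n - 1, by omega⟩
    obtain ⟨hza, hzb⟩ := hz
    have hout (c : ℝ) (hc : c ∈ preCantor (m + 1)) : c < a ∨ b < c := by
      by_contra! h
      exact hab.notMem_of_mem_left h hc
    rcases hout (1 / 3) (Or.inl ⟨1, one_mem_preCantor m, by norm_num⟩) with h₁ | h₁
    · rcases hout (2 / 3) (Or.inr ⟨0, zero_mem_preCantor m, by norm_num⟩) with h₂ | h₂
      · have hab' : Disjoint (Icc (3 * a - 2) (3 * b - 2)) (preCantor m) := by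
          refine disjoint_left.mpr fun w hw hwm => hab.notMem_of_mem_left ?_ (Or.inr ⟨w, hwm, rfl⟩)
          exact ⟨by linarith [hw.1], by linarith [hw.2]⟩
        rw [cantorPoly_succ_of_ge (by linarith), cantorPoly_succ_of_ge (by linarith),
          ih (by linarith) (by linarith) hab' (by omega) ⟨by linarith, by linarith⟩]
      · rw [cantorPoly_of_mem_Ioo ⟨by linarith, by linarith⟩,
          cantorPoly_of_mem_Ioo ⟨by linarith, by linarith⟩]
    · have hab' : Disjoint (Icc (3 * a) (3 * b)) (preCantor m) := by
        refine disjoint_left.mpr fun w hw hwm => hab.notMem_of_mem_left ?_ (Or.inl ⟨w, hwm, rfl⟩)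
        exact ⟨by linarith [hw.1], by linarith [hw.2]⟩
      rw [cantorPoly_succ_of_le (by linarith), cantorPoly_succ_of_le (by linarith),
        ih (by linarith) (by linarith) hab' (by omega) ⟨by linarith, by linarith⟩]

lemma exists_Icc_mem_nhds_disjoint_preCantor {x : ℝ} (hx : x ∈ Icc 0 1 \ cantorC) :
    ∃ N a b, 0 ≤ a ∧ b ≤ 1 ∧ Disjoint (Icc a b) (preCantor N) ∧ Icc a b ∈ 𝓝 x := by
  obtain ⟨N, hN⟩ := notMem_cantorC_iff.mp hx.2
  have hx₀ : x ≠ 0 := fun h => hN (h ▸ zero_mem_preCantor N)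
  have hx₁ : x ≠ 1 := fun h => hN (h ▸ one_mem_preCantor N)
  have hU : Ioo 0 1 \ preCantor N ∈ 𝓝 x :=
    (isOpen_Ioo.sdiff (isCompact_preCantor N).isClosed).mem_nhds
      ⟨⟨hx.1.1.lt_of_ne' hx₀, hx.1.2.lt_of_ne hx₁⟩, hN⟩
  obtain ⟨a, b, hxab, habx, hab⟩ := exists_Icc_mem_subset_of_mem_nhds hU
  exact ⟨N, a, b, (hab ⟨le_rfl, hxab.1.trans hxab.2⟩).1.1.le,
    (hab ⟨hxab.1.trans hxab.2, le_rfl⟩).1.2.le, disjoint_left.mpr fun z hz => (hab hz).2, habx⟩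

/-- The polygonal approximations converge uniformly on `[0,1]`; the limit `F` is
continuous, monotone increasing, has `F 0 = 0`, `F 1 = 1`, agrees with `F_n` for all
large `n` at each point of `[0,1] \ C`, is constant on each connected component of
`[0,1] \ C`, and has derivative `0` at every point of `[0,1] \ C`. -/
theorem cantorPoly_tendstoUniformly :
    ∃ F : ℝ → ℝ,
      TendstoUniformlyOn cantorPoly F Filter.atTop (Set.Icc 0 1) ∧
      ContinuousOn F (Set.Icc 0 1) ∧ MonotoneOn F (Set.Icc 0 1) ∧
      F 0 = 0 ∧ F 1 = 1 ∧
      (∀ x ∈ Set.Icc (0 : ℝ) 1 \ cantorC, ∃ N : ℕ, ∀ n ≥ N, F x = cantorPoly n x) ∧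
      (∀ x ∈ Set.Icc (0 : ℝ) 1 \ cantorC, ∀ y ∈ Set.Icc (0 : ℝ) 1 \ cantorC,
        x ≤ y → Set.Icc x y ∩ cantorC = ∅ → F x = F y) ∧
      ∀ x ∈ Set.Icc (0 : ℝ) 1 \ cantorC, HasDerivAt F 0 x := by
  obtain ⟨F, hF⟩ := exists_tendstoUniformlyOn_of_dist_le_geometric (C := 1) (r := 1 / 2)
    (by norm_num) (by norm_num) fun x hx n => by simpa using dist_cantorPoly_succ_le n hx
  have hlim {x : ℝ} (hx : x ∈ Icc 0 1) := hF.tendsto_at hx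
  have hF_eq {N : ℕ} {a b : ℝ} (ha : 0 ≤ a) (hb : b ≤ 1) (hab : Disjoint (Icc a b) (preCantor N))
      {z : ℝ} (hz : z ∈ Icc a b) : F z = cantorPoly N a :=
    tendsto_nhds_unique_of_eventuallyEq (hlim ⟨ha.trans hz.1, hz.2.trans hb⟩) tendsto_const_nhds
      (eventually_atTop.mpr ⟨N, fun n hn => cantorPoly_eq_of_disjoint_preCantor ha hb hab hn hz⟩)
  refine ⟨F, hF, hF.continuousOn (.of_forall fun n => (continuous_cantorPoly n).continuousOn),
    fun x hx y hy hxy => le_of_tendsto_of_tendsto' (hlim hx) (hlim hy)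
      fun n => monotoneOn_cantorPoly n hx hy hxy,
    tendsto_nhds_unique (hlim ⟨le_rfl, zero_le_one⟩) (by simp),
    tendsto_nhds_unique (hlim ⟨zero_le_one, le_rfl⟩) (by simp), fun x hx => ?_,
    fun x hx y hy hxy hxyC => ?_, fun x hx => ?_⟩
  · obtain ⟨N, hN⟩ := notMem_cantorC_iff.mp hx.2
    have hxN : Disjoint (Icc x x) (preCantor N) := by simpa using hN
    exact ⟨N, fun n hn => (hF_eq hx.1.1 hx.1.2 hxN ⟨le_rfl, le_rfl⟩).trans
      (cantorPoly_eq_of_disjoint_preCantor hx.1.1 hx.1.2 hxN hn ⟨le_rfl, le_rfl⟩).symm⟩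
  · obtain ⟨N, hN⟩ := exists_disjoint_preCantor isCompact_Icc (disjoint_iff_inter_eq_empty.2 hxyC)
    rw [hF_eq hx.1.1 hy.1.2 hN ⟨le_rfl, hxy⟩, hF_eq hx.1.1 hy.1.2 hN ⟨hxy, le_rfl⟩]
  · obtain ⟨N, a, b, ha, hb, hab, habx⟩ := exists_Icc_mem_nhds_disjoint_preCantor hx
    exact (hasDerivAt_const x (cantorPoly N a)).congr_of_eventuallyEq
      (Filter.mem_of_superset habx fun z hz => hF_eq ha hb hab hz)
end

section
/- Netto's theorem (special case proved in the paper): there is no continuous bijection from [0,1] onto [0,1]², and no continuous bijection from [0,1] onto [0,1]³; i.e., every bijective map f: [0,1] → [0,1]² (or f: [0,1] → [0,1]³) is discontinuous. (Key steps: a continuous bijection from the compact space [0,1] has continuous inverse; removing an interior point t₀ disconnects [0,1] but removing f(t₀) does not disconnect the square or cube.) -/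
/-- In a product of two nontrivial connected spaces, the complement of a point
is preconnected. -/
lemma netto_aux_compl_preconnected {X Y : Type*} [TopologicalSpace X] [TopologicalSpace Y]
    [ConnectedSpace X] [ConnectedSpace Y] [Nontrivial X] [Nontrivial Y] (p : X × Y) :
    IsPreconnected ({p}ᶜ : Set (X × Y)) := by
  obtain ⟨x₀, hx₀⟩ := exists_ne p.1
  obtain ⟨y₀, hy₀⟩ := exists_ne p.2
  set V : X → Set (X × Y) := fun x => ({x} ×ˢ (Set.univ : Set Y)) ∪ ((Set.univ : Set X) ×ˢ {y₀})
    with hV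
  set H : Y → Set (X × Y) := fun y => ((Set.univ : Set X) ×ˢ {y}) ∪ ({x₀} ×ˢ (Set.univ : Set Y))
    with hH
  have hVpre : ∀ x, IsPreconnected (V x) := fun x =>
    IsPreconnected.union (x, y₀) (by simp [hV]) (by simp [hV])
      (isPreconnected_singleton.prod isPreconnected_univ)
      (isPreconnected_univ.prod isPreconnected_singleton)
  have hHpre : ∀ y, IsPreconnected (H y) := fun y =>
    IsPreconnected.union (x₀, y) (by simp [hH]) (by simp [hH])
      (isPreconnected_univ.prod isPreconnected_singleton)
      (isPreconnected_singleton.prod isPreconnected_univ)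
  have key : IsPreconnected (⋃₀ ((V '' {x | x ≠ p.1}) ∪ (H '' {y | y ≠ p.2}))) := by
    refine isPreconnected_sUnion (x₀, y₀) _ ?_ ?_
    · rintro s (⟨x, hx, rfl⟩ | ⟨y, hy, rfl⟩)
      · simp [hV]
      · simp [hH]
    · rintro s (⟨x, hx, rfl⟩ | ⟨y, hy, rfl⟩)
      · exact hVpre x
      · exact hHpre y
  have heq : ⋃₀ ((V '' {x | x ≠ p.1}) ∪ (H '' {y | y ≠ p.2})) = ({p}ᶜ : Set (X × Y)) := by
    ext q
    constructor
    · rintro ⟨s, (⟨x, hx, rfl⟩ | ⟨y, hy, rfl⟩), hq⟩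
      · rcases hq with hq | hq
        · simp only [Set.mem_prod, Set.mem_singleton_iff] at hq
          intro h; apply hx; rw [← hq.1]; simp [Set.mem_singleton_iff.1 h]
        · simp only [Set.mem_prod, Set.mem_singleton_iff] at hq
          intro h; apply hy₀; rw [← hq.2]; simp [Set.mem_singleton_iff.1 h]
      · rcases hq with hq | hq
        · simp only [Set.mem_prod, Set.mem_singleton_iff] at hq
          intro h; apply hy; rw [← hq.2]; simp [Set.mem_singleton_iff.1 h]
        · simp only [Set.mem_prod, Set.mem_singleton_iff] at hq
          intro h; apply hx₀; rw [← hq.1]; simp [Set.mem_singleton_iff.1 h]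
    · intro hq
      by_cases h1 : q.1 = p.1
      · have h2 : q.2 ≠ p.2 := by
          intro h2; apply hq; simp [Set.mem_singleton_iff, Prod.ext_iff, h1, h2]
        exact ⟨H q.2, Or.inr ⟨q.2, h2, rfl⟩, Or.inl (by simp)⟩
      · exact ⟨V q.1, Or.inl ⟨q.1, h1, rfl⟩, Or.inl (by simp)⟩
  rwa [heq] at key

/-- A continuous bijection from `[0,1]` to a compact-to-T2 target whose point
complements are preconnected is impossible. -/
lemma netto_aux_main {Z : Type*} [TopologicalSpace Z] [T2Space Z]
    (hc : ∀ p : Z, IsPreconnected ({p}ᶜ : Set Z))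
    (f : Set.Icc (0 : ℝ) 1 → Z) (hb : Function.Bijective f) : ¬ Continuous f := by
  intro hf
  have hcont : Continuous ⇑(Equiv.ofBijective f hb) := hf
  let h : Set.Icc (0 : ℝ) 1 ≃ₜ Z := hcont.homeoOfEquivCompactToT2
  set t₀ : Set.Icc (0 : ℝ) 1 := ⟨1/2, by norm_num⟩ with ht₀
  have hpre : IsPreconnected (h.symm '' ({h t₀}ᶜ : Set Z)) :=
    (hc (h t₀)).image _ h.symm.continuous.continuousOn
  have himg : h.symm '' ({h t₀}ᶜ : Set Z) = ({t₀}ᶜ : Set (Set.Icc (0 : ℝ) 1)) := by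
    ext t
    simp only [Set.mem_image, Set.mem_compl_iff, Set.mem_singleton_iff]
    constructor
    · rintro ⟨z, hz, rfl⟩ he
      exact hz (by rw [← he]; simp)
    · intro ht
      exact ⟨h t, fun he => ht (h.injective he), by simp⟩
  rw [himg] at hpre
  set U : Set (Set.Icc (0 : ℝ) 1) := {t | (t : ℝ) < 1/2} with hU
  set W : Set (Set.Icc (0 : ℝ) 1) := {t | (1/2 : ℝ) < (t : ℝ)} with hW
  have hUo : IsOpen U := isOpen_lt continuous_subtype_val continuous_const
  have hWo : IsOpen W := isOpen_lt continuous_const continuous_subtype_val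
  have hcover : ({t₀}ᶜ : Set (Set.Icc (0 : ℝ) 1)) ⊆ U ∪ W := by
    intro t ht
    rcases lt_trichotomy (t : ℝ) (1/2 : ℝ) with hlt | heqv | hgt
    · exact Or.inl hlt
    · exact absurd (Subtype.ext heqv) ht
    · exact Or.inr hgt
  have h0 : (⟨0, by norm_num⟩ : Set.Icc (0 : ℝ) 1) ∈ ({t₀}ᶜ : Set (Set.Icc (0 : ℝ) 1)) ∩ U := by
    constructor
    · intro he
      have := congrArg Subtype.val (Set.mem_singleton_iff.1 he)
      norm_num at this
    · show (0 : ℝ) < 1/2; norm_num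
  have h1 : (⟨1, by norm_num⟩ : Set.Icc (0 : ℝ) 1) ∈ ({t₀}ᶜ : Set (Set.Icc (0 : ℝ) 1)) ∩ W := by
    constructor
    · intro he
      have := congrArg Subtype.val (Set.mem_singleton_iff.1 he)
      norm_num at this
    · show (1/2 : ℝ) < 1; norm_num
  obtain ⟨t, _, htU, htW⟩ := hpre U W hUo hWo hcover ⟨_, h0⟩ ⟨_, h1⟩
  simp only [hU, hW, Set.mem_setOf_eq] at htU htW
  exact lt_asymm htU htW

/-- Netto's theorem (special case): there is no continuous bijection from `[0,1]`
onto the unit square `[0,1]²`, and none onto the unit cube `[0,1]³`; i.e., every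
bijection from `[0,1]` onto `[0,1]²` (or `[0,1]³`) is discontinuous. -/
theorem netto_special_case :
    (∀ f : Set.Icc (0 : ℝ) 1 → Set.Icc (0 : ℝ) 1 × Set.Icc (0 : ℝ) 1,
        Function.Bijective f → ¬ Continuous f) ∧
      ∀ f : Set.Icc (0 : ℝ) 1 → Set.Icc (0 : ℝ) 1 × Set.Icc (0 : ℝ) 1 × Set.Icc (0 : ℝ) 1,
        Function.Bijective f → ¬ Continuous f := by
  constructor
  · exact fun f hb => netto_aux_main (fun p => netto_aux_compl_preconnected p) f hb
  · exact fun f hb => netto_aux_main (fun p => netto_aux_compl_preconnected p) f hb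
end
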